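/- arXiv:2408.10363 — 2 statements merged into one kernel-verified Lean document; each statement's English description precedes it below -/
import Mathlib

section
/- Let A₁, A₂, A₃ be dichotomic observables on ℂ^{d₁}, B₁, B₂, B₃ be dichotomic observables on ℂ^{d₂}, and ρ a state on ℂ^{d₁}⊗ℂ^{d₂}. If the quantum Bell value attains the optimum, Re Tr[ℐ ρ] = 6, then Re Tr[((A₁+A₂+A₃)⊗1)² ρ] = 0 and Re Tr[(1⊗(B₁+B₂+B₃))² ρ] = 0; consequently Re Tr[((A_xA_{x'}+A_{x'}A_x)⊗1) ρ] = −1 for all x ≠ x' and Re Tr[(1⊗(B_yB_{y'}+B_{y'}B_y)) ρ] = −1 for all y ≠ y'. -/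
/-!
With `α₀ = a₀ + a₁ - a₂`, `α₁ = a₀ - a₁ + a₂`, `α₂ = -a₀ + a₁ + a₂` and `S = a₀ + a₁ + a₂`, the
Bell operator `ℐ = Σ αⱼ bⱼ` satisfies `24 - 4ℐ = Σⱼ (αⱼ - 2bⱼ)² + S²` in any ring in which the
`aᵢ` and `bⱼ` are commuting involutions. For `aᵢ = Aᵢ ⊗ 1` and `bⱼ = 1 ⊗ Bⱼ`, the optimum
`Re Tr[ℐρ] = 6` makes every square have vanishing expectation in the state `ρ`, and since
`ρ ≥ 0` this forces `S ρ = 0`; as `ℐ` is symmetric in the two parties, the same holds on Bob's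
side. For `x ≠ x'` with third index `x''`, `aₓaₓ' + aₓ'aₓ = (S - aₓ'')² - 2`, whose expectation
is `Tr[aₓ''² ρ] - 2 = -1` once `S ρ = ρ S = 0`.
-/

open Kronecker ComplexOrder Matrix

section Ring
variable {R : Type*} [Ring R]

def bellOperator (a b : Fin 3 → R) : R :=
  (a 0 + a 1 - a 2) * b 0 + (a 0 - a 1 + a 2) * b 1 + (-a 0 + a 1 + a 2) * b 2

variable {a b : Fin 3 → R}

lemma bellOperator_comm (hab : ∀ i j, Commute (a i) (b j)) :
    bellOperator b a = bellOperator a b := by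
  have hba : ∀ i j, b j * a i = a i * b j := fun i j => (hab i j).eq.symm
  simp only [bellOperator, add_mul, sub_mul, neg_mul, hba]
  abel

lemma sum_mul_self_eq_sub_four_mul_bellOperator (ha : ∀ i, a i * a i = 1)
    (hb : ∀ j, b j * b j = 1) (hab : ∀ i j, Commute (a i) (b j)) :
    (a 0 + a 1 - a 2 - 2 * b 0) * (a 0 + a 1 - a 2 - 2 * b 0) +
      (a 0 - a 1 + a 2 - 2 * b 1) * (a 0 - a 1 + a 2 - 2 * b 1) +
      (-a 0 + a 1 + a 2 - 2 * b 2) * (-a 0 + a 1 + a 2 - 2 * b 2) +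
      (a 0 + a 1 + a 2) * (a 0 + a 1 + a 2) = 24 - 4 * bellOperator a b := by
  have hba : ∀ i j, b j * a i = a i * b j := fun i j => (hab i j).eq.symm
  -- `noncomm_ring` collects the `1`s coming from `ha` and `hb` as `24 • 1`, not as `24`
  rw [show (24 : R) = 24 • 1 by simp]
  simp only [bellOperator, two_mul, add_mul, mul_add, sub_mul, mul_sub, neg_mul, mul_neg,
    ha, hb, hba]
  noncomm_ring

end Ring

lemma Fin.exists_add_add_eq_of_ne {M : Type*} [AddCommMonoid M] (f : Fin 3 → M) {x x' : Fin 3}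
    (h : x ≠ x') : ∃ x'', f x + f x' + f x'' = f 0 + f 1 + f 2 := by
  refine ⟨-(x + x'), ?_⟩
  fin_cases x <;> fin_cases x' <;> simp at h ⊢ <;> abel

namespace Matrix

section Kronecker
variable {l m n p α : Type*}

theorem sub_kronecker [NonUnitalNonAssocRing α] (A₁ A₂ : Matrix l m α) (B : Matrix n p α) :
    (A₁ - A₂) ⊗ₖ B = A₁ ⊗ₖ B - A₂ ⊗ₖ B := by
  ext; simp [sub_mul]

theorem neg_kronecker [Mul α] [HasDistribNeg α] (A : Matrix l m α) (B : Matrix n p α) :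
    (-A) ⊗ₖ B = -(A ⊗ₖ B) := by
  ext; simp

theorem IsHermitian.kronecker [CommMagma α] [StarMul α] {A : Matrix m m α} {B : Matrix n n α}
    (hA : A.IsHermitian) (hB : B.IsHermitian) : (A ⊗ₖ B).IsHermitian := by
  rw [IsHermitian, conjTranspose_kronecker, hA.eq, hB.eq]

theorem commute_kronecker_one_one_kronecker [CommSemiring α] [Fintype m] [Fintype n]
    [DecidableEq m] [DecidableEq n] (A : Matrix m m α) (B : Matrix n n α) :
    Commute (A ⊗ₖ (1 : Matrix n n α)) ((1 : Matrix m m α) ⊗ₖ B) := by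
  rw [Commute, SemiconjBy, ← mul_kronecker_mul, ← mul_kronecker_mul, Matrix.mul_one,
    Matrix.one_mul, Matrix.mul_one, Matrix.one_mul]

end Kronecker

lemma trace_conjTranspose_mul_self_mul_conjTranspose_mul_self {n α : Type*} [Fintype n]
    [CommSemiring α] [StarRing α] (H s : Matrix n n α) :
    (Hᴴ * H * (sᴴ * s)).trace = ((H * sᴴ)ᴴ * (H * sᴴ)).trace := by
  rw [← Matrix.mul_assoc, trace_mul_comm, conjTranspose_mul, conjTranspose_conjTranspose]
  simp only [Matrix.mul_assoc]

section Trace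
variable {n 𝕜 : Type*} [Fintype n] [RCLike 𝕜]

lemma PosSemidef.exists_eq_conjTranspose_mul_self {ρ : Matrix n n 𝕜} (hρ : ρ.PosSemidef) :
    ∃ s : Matrix n n 𝕜, ρ = sᴴ * s := by
  classical
  open scoped MatrixOrder in
  refine ⟨CFC.sqrt ρ, ?_⟩
  rw [(CFC.sqrt_nonneg ρ).posSemidef.isHermitian.eq, CFC.sqrt_mul_sqrt_self ρ hρ.nonneg]

lemma PosSemidef.trace_conjTranspose_mul_self_mul_nonneg {ρ : Matrix n n 𝕜} (hρ : ρ.PosSemidef)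
    (H : Matrix n n 𝕜) : 0 ≤ (Hᴴ * H * ρ).trace := by
  obtain ⟨s, rfl⟩ := hρ.exists_eq_conjTranspose_mul_self
  rw [trace_conjTranspose_mul_self_mul_conjTranspose_mul_self]
  exact (posSemidef_conjTranspose_mul_self _).trace_nonneg

lemma PosSemidef.trace_conjTranspose_mul_self_mul_eq_zero_iff {ρ : Matrix n n 𝕜}
    (hρ : ρ.PosSemidef) (H : Matrix n n 𝕜) : (Hᴴ * H * ρ).trace = 0 ↔ H * ρ = 0 := by
  obtain ⟨s, rfl⟩ := hρ.exists_eq_conjTranspose_mul_self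
  rw [trace_conjTranspose_mul_self_mul_conjTranspose_mul_self,
    trace_conjTranspose_mul_self_eq_zero_iff, mul_conjTranspose_mul_self_eq_zero]

lemma PosSemidef.mul_eq_zero_of_re_trace_mul_self_mul_eq_zero {ρ H : Matrix n n 𝕜}
    (hρ : ρ.PosSemidef) (hH : H.IsHermitian) (h : RCLike.re (H * H * ρ).trace = 0) :
    H * ρ = 0 := by
  have him := (RCLike.nonneg_iff.1 (hρ.trace_conjTranspose_mul_self_mul_nonneg H)).2
  rw [hH.eq] at him
  rw [← hρ.trace_conjTranspose_mul_self_mul_eq_zero_iff, hH.eq]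
  exact RCLike.ext (by simpa using h) (by simpa using him)

end Trace

lemma trace_sub_mul_sub_mul_of_mul_eq_zero {n α : Type*} [Fintype n] [CommRing α]
    {S T ρ : Matrix n n α} (hS : S * ρ = 0) (hS' : ρ * S = 0) :
    ((S - T) * (S - T) * ρ).trace = (T * T * ρ).trace := by
  have hSTρ : (S * (T * ρ)).trace = 0 := by
    rw [trace_mul_comm, Matrix.mul_assoc, hS', Matrix.mul_zero, trace_zero]
  simp only [sub_mul, mul_sub, Matrix.mul_assoc, hS, Matrix.mul_zero, trace_sub, trace_zero, hSTρ]
  ring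

end Matrix

lemma bellOperator_kronecker_one_one_kronecker {m n α : Type*} [Fintype m] [Fintype n]
    [DecidableEq m] [DecidableEq n] [CommRing α] (A : Fin 3 → Matrix m m α)
    (B : Fin 3 → Matrix n n α) :
    bellOperator (fun x => A x ⊗ₖ (1 : Matrix n n α)) (fun y => (1 : Matrix m m α) ⊗ₖ B y) =
      (A 0 + A 1 - A 2) ⊗ₖ B 0 + (A 0 - A 1 + A 2) ⊗ₖ B 1 + (-A 0 + A 1 + A 2) ⊗ₖ B 2 := by
  simp only [bellOperator, ← add_kronecker, ← sub_kronecker, ← neg_kronecker,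
    ← mul_kronecker_mul, Matrix.mul_one, Matrix.one_mul]

section Bell
variable {n 𝕜 : Type*} [Fintype n] [DecidableEq n] [RCLike 𝕜] {a b : Fin 3 → Matrix n n 𝕜}
  {ρ : Matrix n n 𝕜}

lemma sum_mul_eq_zero_of_re_trace_bellOperator_mul_eq_six (ha_herm : ∀ i, (a i).IsHermitian)
    (hb_herm : ∀ j, (b j).IsHermitian) (ha : ∀ i, a i * a i = 1) (hb : ∀ j, b j * b j = 1)
    (hab : ∀ i j, Commute (a i) (b j)) (hρ : ρ.PosSemidef) (htr : ρ.trace = 1)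
    (hopt : RCLike.re (bellOperator a b * ρ).trace = 6) : (a 0 + a 1 + a 2) * ρ = 0 := by
  let φ : Matrix n n 𝕜 →+ ℝ :=
    RCLike.reLm.toAddMonoidHom.comp ((traceAddMonoidHom n 𝕜).comp (AddMonoidHom.mulRight ρ))
  have hsq : ∀ x : Matrix n n 𝕜, x.IsHermitian → 0 ≤ φ (x * x) := by
    intro x hx
    have := (RCLike.nonneg_iff.1 (hρ.trace_conjTranspose_mul_self_mul_nonneg x)).1
    rwa [hx.eq] at this
  have hsos := congrArg φ (sum_mul_self_eq_sub_four_mul_bellOperator ha hb hab)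
  have h24 : φ 24 = 24 := by
    change RCLike.re (24 * ρ).trace = 24
    rw [← Nat.ofNat_nsmul_eq_mul, trace_smul, htr]
    simp
  have h4 : φ (4 * bellOperator a b) = 24 := by
    change RCLike.re (4 * bellOperator a b * ρ).trace = 24
    rw [Matrix.mul_assoc, ← Nat.ofNat_nsmul_eq_mul, trace_smul, map_nsmul, hopt]
    norm_num
  rw [map_sub, h24, h4, sub_self, map_add, map_add, map_add] at hsos
  have hS : (a 0 + a 1 + a 2).IsHermitian := ((ha_herm 0).add (ha_herm 1)).add (ha_herm 2)
  have h2b : ∀ j, (2 * b j).IsHermitian := fun j => by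
    rw [two_mul]; exact (hb_herm j).add (hb_herm j)
  have hSS : φ ((a 0 + a 1 + a 2) * (a 0 + a 1 + a 2)) = 0 := by
    linarith [hsq _ hS, hsq _ ((((ha_herm 0).add (ha_herm 1)).sub (ha_herm 2)).sub (h2b 0)),
      hsq _ ((((ha_herm 0).sub (ha_herm 1)).add (ha_herm 2)).sub (h2b 1)),
      hsq _ ((((ha_herm 0).neg.add (ha_herm 1)).add (ha_herm 2)).sub (h2b 2))]
  exact hρ.mul_eq_zero_of_re_trace_mul_self_mul_eq_zero hS hSS

lemma trace_mul_add_mul_mul_eq_neg_one (ha_herm : ∀ i, (a i).IsHermitian)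
    (ha : ∀ i, a i * a i = 1) (hρ : ρ.IsHermitian) (htr : ρ.trace = 1)
    (hS : (a 0 + a 1 + a 2) * ρ = 0) {x x' : Fin 3} (hxx' : x ≠ x') :
    ((a x * a x' + a x' * a x) * ρ).trace = -1 := by
  obtain ⟨x'', hx''⟩ := Fin.exists_add_add_eq_of_ne a hxx'
  have hS' : ρ * (a 0 + a 1 + a 2) = 0 := by
    simpa [conjTranspose_mul, hρ.eq, (((ha_herm 0).add (ha_herm 1)).add (ha_herm 2)).eq]
      using congrArg conjTranspose hS
  have hanti : a x * a x' + a x' * a x =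
      (a 0 + a 1 + a 2 - a x'') * (a 0 + a 1 + a 2 - a x'') - 2 := by
    rw [← hx'', add_sub_cancel_right, ← one_add_one_eq_two]
    simp only [add_mul, mul_add, ha]
    abel
  rw [hanti, sub_mul, trace_sub, trace_sub_mul_sub_mul_of_mul_eq_zero hS hS', ha,
    Matrix.one_mul, ← Nat.ofNat_nsmul_eq_mul, trace_smul, htr]
  norm_num

end Bell

/-- Self-testing conditions from the optimal quantum Bell value: if
`Re Tr[ℐ ρ] = 6` then `Re Tr[((A₁+A₂+A₃)⊗1)² ρ] = 0` and
`Re Tr[(1⊗(B₁+B₂+B₃))² ρ] = 0`, and consequently the anticommutators of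
distinct observables have expectation `−1` on `ρ`. -/
theorem self_testing_conditions {d₁ d₂ : ℕ}
    (A : Fin 3 → Matrix (Fin d₁) (Fin d₁) ℂ)
    (B : Fin 3 → Matrix (Fin d₂) (Fin d₂) ℂ)
    (hA : ∀ x, (A x).IsHermitian) (hAsq : ∀ x, A x * A x = 1)
    (hB : ∀ y, (B y).IsHermitian) (hBsq : ∀ y, B y * B y = 1)
    (ρ : Matrix (Fin d₁ × Fin d₂) (Fin d₁ × Fin d₂) ℂ)
    (hρ : ρ.PosSemidef) (hρtr : ρ.trace = 1)
    (hopt : ((((A 0 + A 1 - A 2) ⊗ₖ B 0 + (A 0 - A 1 + A 2) ⊗ₖ B 1 +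
        (-A 0 + A 1 + A 2) ⊗ₖ B 2) * ρ).trace).re = 6) :
    (((((A 0 + A 1 + A 2) ⊗ₖ (1 : Matrix (Fin d₂) (Fin d₂) ℂ)) *
        ((A 0 + A 1 + A 2) ⊗ₖ (1 : Matrix (Fin d₂) (Fin d₂) ℂ)) * ρ).trace).re = 0) ∧
    (((((1 : Matrix (Fin d₁) (Fin d₁) ℂ) ⊗ₖ (B 0 + B 1 + B 2)) *
        ((1 : Matrix (Fin d₁) (Fin d₁) ℂ) ⊗ₖ (B 0 + B 1 + B 2)) * ρ).trace).re = 0) ∧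
    (∀ x x' : Fin 3, x ≠ x' →
      ((((A x * A x' + A x' * A x) ⊗ₖ (1 : Matrix (Fin d₂) (Fin d₂) ℂ)) * ρ).trace).re = -1) ∧
    (∀ y y' : Fin 3, y ≠ y' →
      ((((1 : Matrix (Fin d₁) (Fin d₁) ℂ) ⊗ₖ (B y * B y' + B y' * B y)) * ρ).trace).re = -1) := by
  let a : Fin 3 → Matrix (Fin d₁ × Fin d₂) (Fin d₁ × Fin d₂) ℂ := fun x => A x ⊗ₖ 1
  let b : Fin 3 → Matrix (Fin d₁ × Fin d₂) (Fin d₁ × Fin d₂) ℂ := fun y => 1 ⊗ₖ B y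
  have ha_herm : ∀ x, (a x).IsHermitian := fun x => (hA x).kronecker isHermitian_one
  have hb_herm : ∀ y, (b y).IsHermitian := fun y => isHermitian_one.kronecker (hB y)
  have ha : ∀ x, a x * a x = 1 := fun x => by
    simp only [a, ← mul_kronecker_mul, hAsq, Matrix.mul_one, one_kronecker_one]
  have hb : ∀ y, b y * b y = 1 := fun y => by
    simp only [b, ← mul_kronecker_mul, hBsq, Matrix.mul_one, one_kronecker_one]
  have hab : ∀ x y, Commute (a x) (b y) := fun x y => commute_kronecker_one_one_kronecker _ _
  have hbell := bellOperator_kronecker_one_one_kronecker A B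
  have hSa := sum_mul_eq_zero_of_re_trace_bellOperator_mul_eq_six ha_herm hb_herm ha hb hab hρ
    hρtr (hbell ▸ hopt)
  have hSb := sum_mul_eq_zero_of_re_trace_bellOperator_mul_eq_six hb_herm ha_herm hb ha
    (fun y x => (hab x y).symm) hρ hρtr (by rwa [bellOperator_comm hab, hbell])
  have hsumA : (A 0 + A 1 + A 2) ⊗ₖ (1 : Matrix (Fin d₂) (Fin d₂) ℂ) = a 0 + a 1 + a 2 := by
    simp only [a, add_kronecker]
  have hsumB : (1 : Matrix (Fin d₁) (Fin d₁) ℂ) ⊗ₖ (B 0 + B 1 + B 2) = b 0 + b 1 + b 2 := by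
    simp only [b, kronecker_add]
  refine ⟨?_, ?_, fun x x' hxx' => ?_, fun y y' hyy' => ?_⟩
  · rw [hsumA, Matrix.mul_assoc, hSa, Matrix.mul_zero, trace_zero, Complex.zero_re]
  · rw [hsumB, Matrix.mul_assoc, hSb, Matrix.mul_zero, trace_zero, Complex.zero_re]
  · have h := trace_mul_add_mul_mul_eq_neg_one ha_herm ha hρ.isHermitian hρtr hSa hxx'
    simp only [a, ← mul_kronecker_mul, Matrix.mul_one, ← add_kronecker] at h
    rw [h, Complex.neg_re, Complex.one_re]
  · have h := trace_mul_add_mul_mul_eq_neg_one hb_herm hb hρ.isHermitian hρtr hSb hyy'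
    simp only [b, ← mul_kronecker_mul, Matrix.mul_one, ← kronecker_add] at h
    rw [h, Complex.neg_re, Complex.one_re]
end

section
/- Let B₁, B₂, B₃ be dichotomic observables on ℂ^d and ρ a state on ℂ^d. Define 𝔅₁ = B₁+B₂−B₃, 𝔅₂ = B₁−B₂+B₃, 𝔅₃ = −B₁+B₂+B₃. Then √(Re Tr[𝔅₁² ρ]) + √(Re Tr[𝔅₂² ρ]) + √(Re Tr[𝔅₃² ρ]) ≤ √(3·(12 − Re Tr[(B₁+B₂+B₃)² ρ])) ≤ 6, so the degree of incompatibility D_T = Σ_y √(Re Tr[𝔅_y² ρ]) − 4 is at most 2; moreover, if B₁+B₂+B₃ = 0 then each √(Re Tr[𝔅_y² ρ]) = 2 and the sum equals 6 (i.e. D_T attains its maximal value 2). -/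
/-!
With `S = B₁ + B₂ + B₃`, the ring identity `𝔅₁² + 𝔅₂² + 𝔅₃² + S² = 4 (B₁² + B₂² + B₃²)` turns,
for involutions and a unit-trace `ρ`, into `Σ_y ⟨𝔅_y²⟩_ρ = 12 − ⟨S²⟩_ρ`. All four expectations are
nonnegative because squares of Hermitian matrices are positive, so Cauchy–Schwarz
`√a + √b + √c ≤ √(3(a + b + c))` gives the bound, and `⟨S²⟩_ρ ≥ 0` gives `≤ 6`.
If `S = 0` then each `𝔅_y` is `−2` times one of the `B_k`, whose square is `4`.
-/

open ComplexOrder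

theorem Real.sqrt_add_sqrt_add_sqrt_le {a b c : ℝ} (ha : 0 ≤ a) (hb : 0 ≤ b) (hc : 0 ≤ c) :
    √a + √b + √c ≤ √(3 * (a + b + c)) := by
  apply Real.le_sqrt_of_sq_le
  nlinarith [sq_nonneg (√a - √b), sq_nonneg (√a - √c), sq_nonneg (√b - √c),
    Real.sq_sqrt ha, Real.sq_sqrt hb, Real.sq_sqrt hc]

section Ring

variable {R : Type*} [Ring R]

theorem trine_mul_self_add_sum_mul_self (a b c : R) :
    (a + b - c) * (a + b - c) + (a - b + c) * (a - b + c) + (-a + b + c) * (-a + b + c)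
      + (a + b + c) * (a + b + c) = 4 • (a * a + b * b + c * c) := by
  noncomm_ring

theorem trine_eq_of_add_add_eq_zero {a b c : R} (h : a + b + c = 0) :
    a + b - c = -(2 • c) ∧ a - b + c = -(2 • b) ∧ -a + b + c = -(2 • a) := by
  refine ⟨?_, ?_, ?_⟩ <;> rw [← sub_eq_zero, ← h] <;> abel

end Ring

namespace Matrix

variable {𝕜 ι : Type*} [RCLike 𝕜] [Fintype ι]

theorem IsHermitian.re_trace_mul_self_mul_nonneg {A ρ : Matrix ι ι 𝕜}
    (hA : A.IsHermitian) (hρ : ρ.PosSemidef) : 0 ≤ RCLike.re (A * A * ρ).trace := by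
  have h := (hρ.mul_mul_conjTranspose_same A).trace_nonneg
  rw [hA.eq, trace_mul_cycle] at h
  exact (RCLike.nonneg_iff.mp h).1

variable [DecidableEq ι]

theorem re_trace_trine_add_eq {B₁ B₂ B₃ ρ : Matrix ι ι 𝕜}
    (hB₁ : B₁ * B₁ = 1) (hB₂ : B₂ * B₂ = 1) (hB₃ : B₃ * B₃ = 1) (hρ : ρ.trace = 1) :
    RCLike.re ((B₁ + B₂ - B₃) * (B₁ + B₂ - B₃) * ρ).trace
      + RCLike.re ((B₁ - B₂ + B₃) * (B₁ - B₂ + B₃) * ρ).trace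
      + RCLike.re ((-B₁ + B₂ + B₃) * (-B₁ + B₂ + B₃) * ρ).trace
      = 12 - RCLike.re ((B₁ + B₂ + B₃) * (B₁ + B₂ + B₃) * ρ).trace := by
  have h12 : RCLike.re ((4 • (B₁ * B₁ + B₂ * B₂ + B₃ * B₃)) * ρ).trace = 12 := by
    simp only [hB₁, hB₂, hB₃, smul_mul_assoc, add_mul, one_mul, trace_smul, trace_add, hρ]
    norm_num
  have h := congrArg (fun O => RCLike.re (O * ρ).trace) (trine_mul_self_add_sum_mul_self B₁ B₂ B₃)
  rw [h12, add_mul, add_mul, add_mul] at h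
  simp only [trace_add, map_add] at h
  linarith

theorem sqrt_re_trace_neg_two_smul_mul_self_mul {B ρ : Matrix ι ι 𝕜}
    (hB : B * B = 1) (hρ : ρ.trace = 1) :
    √(RCLike.re ((-(2 • B)) * (-(2 • B)) * ρ).trace) = 2 := by
  rw [neg_mul_neg, smul_mul_smul, hB, smul_mul_assoc, one_mul, trace_smul, hρ]
  norm_num

end Matrix

/-- The degree of incompatibility of three dichotomic observables (trine
version): with `𝔅₁ = B₁+B₂−B₃`, `𝔅₂ = B₁−B₂+B₃`, `𝔅₃ = −B₁+B₂+B₃` and the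
state-dependent norms `‖𝔅_y‖_ρ = √(Re Tr[𝔅_y² ρ])`, the sum of the norms is at
most `√(3(12 − Re Tr[(B₁+B₂+B₃)² ρ])) ≤ 6`, so `D_T = Σ‖𝔅_y‖_ρ − 4 ≤ 2`;
moreover if `B₁+B₂+B₃ = 0` each norm equals 2 and the sum equals 6. -/
theorem trine_incompatibility_bound {d : ℕ}
    (B₁ B₂ B₃ : Matrix (Fin d) (Fin d) ℂ)
    (hB₁ : B₁.IsHermitian) (hB₂ : B₂.IsHermitian) (hB₃ : B₃.IsHermitian)
    (hB₁sq : B₁ * B₁ = 1) (hB₂sq : B₂ * B₂ = 1) (hB₃sq : B₃ * B₃ = 1)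
    (ρ : Matrix (Fin d) (Fin d) ℂ) (hρ : ρ.PosSemidef) (hρtr : ρ.trace = 1) :
    let 𝔅₁ := B₁ + B₂ - B₃
    let 𝔅₂ := B₁ - B₂ + B₃
    let 𝔅₃ := -B₁ + B₂ + B₃
    let n : Matrix (Fin d) (Fin d) ℂ → ℝ := fun O => Real.sqrt (((O * O * ρ).trace).re)
    (n 𝔅₁ + n 𝔅₂ + n 𝔅₃
        ≤ Real.sqrt (3 * (12 - (((B₁ + B₂ + B₃) * (B₁ + B₂ + B₃) * ρ).trace).re))) ∧
    (Real.sqrt (3 * (12 - (((B₁ + B₂ + B₃) * (B₁ + B₂ + B₃) * ρ).trace).re)) ≤ 6) ∧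
    (n 𝔅₁ + n 𝔅₂ + n 𝔅₃ - 4 ≤ 2) ∧
    (B₁ + B₂ + B₃ = 0 →
      (n 𝔅₁ = 2 ∧ n 𝔅₂ = 2 ∧ n 𝔅₃ = 2) ∧ n 𝔅₁ + n 𝔅₂ + n 𝔅₃ = 6) := by
  intro 𝔅₁ 𝔅₂ 𝔅₃ n
  have hsum := Matrix.re_trace_trine_add_eq hB₁sq hB₂sq hB₃sq hρtr
  have h₁ := ((hB₁.add hB₂).sub hB₃).re_trace_mul_self_mul_nonneg hρ
  have h₂ := ((hB₁.sub hB₂).add hB₃).re_trace_mul_self_mul_nonneg hρ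
  have h₃ := ((hB₁.neg.add hB₂).add hB₃).re_trace_mul_self_mul_nonneg hρ
  have hS := ((hB₁.add hB₂).add hB₃).re_trace_mul_self_mul_nonneg hρ
  simp only [RCLike.re_to_complex] at hsum h₁ h₂ h₃ hS
  have hbound : n 𝔅₁ + n 𝔅₂ + n 𝔅₃
      ≤ √(3 * (12 - (((B₁ + B₂ + B₃) * (B₁ + B₂ + B₃) * ρ).trace).re)) := by
    rw [← hsum]
    exact Real.sqrt_add_sqrt_add_sqrt_le h₁ h₂ h₃
  have hsix : √(3 * (12 - (((B₁ + B₂ + B₃) * (B₁ + B₂ + B₃) * ρ).trace).re)) ≤ 6 :=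
    Real.sqrt_le_iff.mpr ⟨by norm_num, by linarith⟩
  refine ⟨hbound, hsix, by linarith, fun h0 => ?_⟩
  obtain ⟨e₁, e₂, e₃⟩ := trine_eq_of_add_add_eq_zero h0
  have hn₁ : n 𝔅₁ = 2 := by
    simp only [n, 𝔅₁, e₁]; exact Matrix.sqrt_re_trace_neg_two_smul_mul_self_mul hB₃sq hρtr
  have hn₂ : n 𝔅₂ = 2 := by
    simp only [n, 𝔅₂, e₂]; exact Matrix.sqrt_re_trace_neg_two_smul_mul_self_mul hB₂sq hρtr
  have hn₃ : n 𝔅₃ = 2 := by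
    simp only [n, 𝔅₃, e₃]; exact Matrix.sqrt_re_trace_neg_two_smul_mul_self_mul hB₁sq hρtr
  exact ⟨⟨hn₁, hn₂, hn₃⟩, by rw [hn₁, hn₂, hn₃]; norm_num⟩
end
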